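/- Let w⁰ ∈ ℝ^n with w⁰_j > 0 and ∑_j w⁰_j = 1, and let r ∈ ℝ^n be such that min_j r_j < 0 < max_j r_j. Then there exists a unique ε̂ ∈ ℝ such that ∑_j w_j(ε̂) r_j = 0, where w_j(ε) = w⁰_j exp(ε r_j)/∑_k w⁰_k exp(ε r_k). -/

import Mathlib

open Real Filter Finset

/-! The numerator `g ε = ∑ⱼ w⁰ⱼ exp(ε rⱼ) rⱼ` of the weighted mean has the same sign as the mean
itself. Each summand `ε ↦ w⁰ⱼ exp(ε rⱼ) rⱼ` is monotone, strictly so when `rⱼ ≠ 0`, so `g` is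
strictly increasing. A summand with `rⱼ > 0` tends to `+∞` as `ε → ∞` while the others stay bounded
below, and symmetrically a summand with `rⱼ < 0` drives `g` to `-∞` as `ε → -∞`. Being continuous,
`g` is therefore a bijection of `ℝ`, and its unique zero is the tilting parameter. -/

section MonotoneSum

variable {ι α β : Type*} [Preorder α] {f : ι → α → β} {s : Finset ι} {i₀ : ι}

theorem monotone_finset_sum [AddCommMonoid β] [PartialOrder β] [IsOrderedAddMonoid β]
    (hf : ∀ i, Monotone (f i)) : Monotone fun x ↦ ∑ i ∈ s, f i x :=
  fun _ _ hab ↦ sum_le_sum fun i _ ↦ hf i hab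

theorem strictMono_finset_sum_of_monotone [AddCommMonoid β] [PartialOrder β]
    [IsOrderedCancelAddMonoid β] (hf : ∀ i, Monotone (f i)) (hi₀ : i₀ ∈ s)
    (hstrict : StrictMono (f i₀)) : StrictMono fun x ↦ ∑ i ∈ s, f i x :=
  fun _ _ hab ↦ sum_lt_sum (fun i _ ↦ hf i hab.le) ⟨i₀, hi₀, hstrict hab⟩

variable [Nonempty α] [AddCommGroup β] [PartialOrder β] [IsOrderedAddMonoid β]

theorem tendsto_finset_sum_atTop_of_monotone (hf : ∀ i, Monotone (f i)) (hi₀ : i₀ ∈ s)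
    (htop : Tendsto (f i₀) atTop atTop) : Tendsto (fun x ↦ ∑ i ∈ s, f i x) atTop atTop := by
  classical
  obtain ⟨a⟩ := ‹Nonempty α›
  simp only [← sum_erase_add s _ hi₀]
  exact tendsto_atTop_add_left_of_le' _ _
    ((eventually_ge_atTop a).mono fun _ hx ↦ monotone_finset_sum hf hx) htop

theorem tendsto_finset_sum_atBot_of_monotone (hf : ∀ i, Monotone (f i)) (hi₀ : i₀ ∈ s)
    (hbot : Tendsto (f i₀) atBot atBot) : Tendsto (fun x ↦ ∑ i ∈ s, f i x) atBot atBot :=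
  tendsto_finset_sum_atTop_of_monotone (α := αᵒᵈ) (β := βᵒᵈ) (fun i ↦ (hf i).dual) hi₀ hbot

end MonotoneSum

section ExpTilt

variable {c r : ℝ}

theorem strictMono_exp_mul_mul (hr : r ≠ 0) : StrictMono fun ε ↦ exp (ε * r) * r := by
  rcases hr.lt_or_gt with hneg | hpos
  · exact (exp_strictMono.comp_strictAnti (strictAnti_mul_right hneg)).mul_const_of_neg hneg
  · exact (exp_strictMono.comp (strictMono_mul_right_of_pos hpos)).mul_const hpos

theorem monotone_mul_exp_mul_mul (hc : 0 ≤ c) (r : ℝ) :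
    Monotone fun ε ↦ c * exp (ε * r) * r := by
  simp only [mul_assoc]
  refine Monotone.const_mul ?_ hc
  rcases eq_or_ne r 0 with rfl | hr
  · simpa using monotone_const
  · exact (strictMono_exp_mul_mul hr).monotone

theorem strictMono_mul_exp_mul_mul (hc : 0 < c) (hr : r ≠ 0) :
    StrictMono fun ε ↦ c * exp (ε * r) * r := by
  simpa only [mul_assoc] using (strictMono_exp_mul_mul hr).const_mul hc

theorem tendsto_mul_exp_mul_mul_atTop (hc : 0 < c) (hr : 0 < r) :
    Tendsto (fun ε ↦ c * exp (ε * r) * r) atTop atTop :=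
  ((tendsto_exp_atTop.comp (tendsto_id.atTop_mul_const hr)).const_mul_atTop hc).atTop_mul_const hr

theorem tendsto_mul_exp_mul_mul_atBot (hc : 0 < c) (hr : r < 0) :
    Tendsto (fun ε ↦ c * exp (ε * r) * r) atBot atBot :=
  ((tendsto_exp_atTop.comp (tendsto_id.atBot_mul_const_of_neg hr)).const_mul_atTop
    hc).atTop_mul_const_of_neg hr

end ExpTilt

theorem sum_div_sum_mul_eq_zero_iff {ι : Type*} {s : Finset ι} {a : ι → ℝ}
    (ha : ∑ k ∈ s, a k ≠ 0) (r : ι → ℝ) :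
    ∑ j ∈ s, a j / (∑ k ∈ s, a k) * r j = 0 ↔ ∑ j ∈ s, a j * r j = 0 := by
  simp only [div_mul_eq_mul_div, ← sum_div, div_eq_zero_iff, ha, or_false]

theorem targeting_equation_unique_root_general {n : ℕ} (w0 r : Fin n → ℝ)
    (hw0 : ∀ j, 0 < w0 j)
    (hneg : ∃ j, r j < 0) (hpos : ∃ j, 0 < r j) :
    ∃! ε : ℝ,
      ∑ j, (w0 j * Real.exp (ε * r j) / ∑ k, w0 k * Real.exp (ε * r k)) * r j = 0 := by
  obtain ⟨jn, hjn⟩ := hneg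
  obtain ⟨jp, hjp⟩ := hpos
  set g : ℝ → ℝ := fun ε ↦ ∑ j, w0 j * exp (ε * r j) * r j
  have hmono (j : Fin n) := monotone_mul_exp_mul_mul (hw0 j).le (r j)
  have hg_strictMono : StrictMono g :=
    strictMono_finset_sum_of_monotone hmono (mem_univ jp)
      (strictMono_mul_exp_mul_mul (hw0 jp) hjp.ne')
  obtain ⟨ε, hε⟩ : ∃ ε, g ε = 0 :=
    Continuous.surjective (by fun_prop)
      (tendsto_finset_sum_atTop_of_monotone hmono (mem_univ jp)
        (tendsto_mul_exp_mul_mul_atTop (hw0 jp) hjp))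
      (tendsto_finset_sum_atBot_of_monotone hmono (mem_univ jn)
        (tendsto_mul_exp_mul_mul_atBot (hw0 jn) hjn)) 0
  have hroot_iff (ε : ℝ) := sum_div_sum_mul_eq_zero_iff
    (sum_pos (fun k _ ↦ mul_pos (hw0 k) (exp_pos (ε * r k))) ⟨jp, mem_univ jp⟩).ne' r
  exact ⟨ε, (hroot_iff ε).2 hε,
    fun ε' hε' ↦ hg_strictMono.injective (((hroot_iff ε').1 hε').trans hε.symm)⟩

/-- Existence and uniqueness of the TSC tilting parameter: if the residuals take
both strictly negative and strictly positive values, the targeting equation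
`∑ w_j(ε) r_j = 0` has a unique root. -/
theorem targeting_equation_unique_root {n : ℕ} (w0 r : Fin n → ℝ)
    (hw0 : ∀ j, 0 < w0 j) (hsum : ∑ j, w0 j = 1)
    (hneg : ∃ j, r j < 0) (hpos : ∃ j, 0 < r j) :
    ∃! ε : ℝ,
      ∑ j, (w0 j * Real.exp (ε * r j) / ∑ k, w0 k * Real.exp (ε * r k)) * r j = 0 :=
  targeting_equation_unique_root_general w0 r hw0 hneg hpos
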